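/- arXiv:1103.2218 — 2 statements merged into one kernel-verified Lean document; each statement's English description precedes it below -/
import Mathlib

section
/- Let G = (V,E) be a finite graph and e ∈ E an edge of G. Then the covered components polynomial satisfies the recurrence C(G,x,y,z) = C(G₋ₑ,x,y,z) + y·C(G/ₑ,x,y,z) + (xyz − xy)·C(G†ₑ,x,y,z), where G₋ₑ is G with e deleted, G/ₑ is G with e contracted (the edge removed and its endpoints merged), and G†ₑ is G with e extracted (e and both its incident vertices removed). -/
/-!
Split off the subsets containing `e`, writing them as `insert e B` with `B ⊆ E ∖ {e}`. Merging
`v₂` into `v₁` identifies the components of `⟨insert e B⟩` in `G` with those of `⟨B⟩` in `G/ₑ`,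
so the number of components agrees. The covered components agree as well, except when no edge
of `B` meets `v₁` or `v₂`: then the component of `v₁` is covered by `e` in `G` but is an
isolated vertex in `G/ₑ`, which costs a factor `z`. These `B` are exactly the edge sets of
`G†ₑ`, and on them `G/ₑ` is `G†ₑ` plus the isolated vertex `v₁`, which costs a factor `x`.
-/

open MvPolynomial Finset
open scoped Classical

noncomputable section

/-- A finite multigraph: a finite vertex set `verts` in an ambient type `α`, a finite
edge set `edges` in an index type `β` (so parallel edges are allowed), and an endpoint
map `ends` sending each edge to an unordered pair of vertices (loops are allowed). -/
structure Multigraph (α β : Type) where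
  verts : Finset α
  edges : Finset β
  ends : β → Sym2 α
  ends_mem : ∀ f ∈ edges, ∀ v ∈ ends f, v ∈ verts

namespace Multigraph

variable {α β : Type}

/-- The simple graph underlying the spanning subgraph with edge set `A`. -/
def sg (G : Multigraph α β) (A : Finset β) : SimpleGraph α :=
  SimpleGraph.fromEdgeSet {s | ∃ f ∈ A, G.ends f = s}

/-- A connected component of the spanning subgraph `⟨A⟩` is covered if it contains an
endpoint of an edge of `A`. -/
def covered (G : Multigraph α β) (A : Finset β) (c : (G.sg A).ConnectedComponent) : Prop :=
  ∃ f ∈ A, ∃ v, v ∈ G.ends f ∧ (G.sg A).connectedComponentMk v = c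

/-- `c(⟨A⟩)`: the number of covered components of the spanning subgraph `⟨A⟩`. -/
def nCov (G : Multigraph α β) (A : Finset β) : ℕ :=
  Nat.card {c : (G.sg A).ConnectedComponent // G.covered A c}

/-- `k(⟨A⟩)`: the number of connected components of the spanning subgraph `⟨A⟩`,
i.e. the covered components together with the isolated vertices. -/
def nComp (G : Multigraph α β) (A : Finset β) : ℕ :=
  G.nCov A + (G.verts.filter (fun v => ∀ f ∈ A, v ∉ G.ends f)).card

/-- The covered components polynomial
`C(G,x,y,z) = ∑_{A ⊆ E} x^{k(⟨A⟩)} y^{|A|} z^{c(⟨A⟩)}`, with `x = X 0`, `y = X 1`,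
`z = X 2`. -/
def ccp (G : Multigraph α β) : MvPolynomial (Fin 3) ℤ :=
  ∑ A ∈ G.edges.powerset, X 0 ^ G.nComp A * X 1 ^ A.card * X 2 ^ G.nCov A

/-- `G₋ₑ`: deletion of the edge `e`. -/
def delete (G : Multigraph α β) (e : β) : Multigraph α β where
  verts := G.verts
  edges := G.edges.erase e
  ends := G.ends
  ends_mem := fun f hf => G.ends_mem f (Finset.mem_of_mem_erase hf)

/-- `G/ₑ`: contraction of the edge `e` with endpoints `v₁`, `v₂`:
the edge is removed and `v₂` is merged into `v₁`. -/
def contract (G : Multigraph α β) (e : β) (v₁ v₂ : α) : Multigraph α β where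
  verts := insert v₁ (G.verts.erase v₂)
  edges := G.edges.erase e
  ends := fun f => Sym2.map (fun w => if w = v₂ then v₁ else w) (G.ends f)
  ends_mem := by
    intro f hf v hv
    obtain ⟨w, hw, rfl⟩ := Sym2.mem_map.mp hv
    by_cases h : w = v₂
    · simp [h]
    · simp only [if_neg h]
      exact Finset.mem_insert_of_mem
        (Finset.mem_erase.mpr ⟨h, G.ends_mem f (Finset.mem_of_mem_erase hf) w hw⟩)

/-- `G†ₑ`: extraction of an edge with endpoints `v₁`, `v₂`: the vertices `v₁`, `v₂`
and all edges incident to them (in particular the edge itself) are removed. -/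
def extract (G : Multigraph α β) (v₁ v₂ : α) : Multigraph α β where
  verts := (G.verts.erase v₁).erase v₂
  edges := G.edges.filter (fun f => v₁ ∉ G.ends f ∧ v₂ ∉ G.ends f)
  ends := G.ends
  ends_mem := by
    intro f hf v hv
    rw [Finset.mem_filter] at hf
    refine Finset.mem_erase.mpr ⟨?_, Finset.mem_erase.mpr ⟨?_, G.ends_mem f hf.1 v hv⟩⟩
    · rintro rfl; exact hf.2.2 hv
    · rintro rfl; exact hf.2.1 hv

/-- `G₋ᵥ`: deletion of the vertex `v` together with all incident edges. -/
def deleteVert (G : Multigraph α β) (v : α) : Multigraph α β where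
  verts := G.verts.erase v
  edges := G.edges.filter (fun f => v ∉ G.ends f)
  ends := G.ends
  ends_mem := by
    intro f hf w hw
    rw [Finset.mem_filter] at hf
    exact Finset.mem_erase.mpr ⟨by rintro rfl; exact hf.2 hw, G.ends_mem f hf.1 w hw⟩

/-- Disjoint union of two multigraphs. -/
def disjUnion {α' β' : Type} (G : Multigraph α β) (H : Multigraph α' β') :
    Multigraph (α ⊕ α') (β ⊕ β') where
  verts := G.verts.disjSum H.verts
  edges := G.edges.disjSum H.edges
  ends := Sum.elim (fun f => (G.ends f).map Sum.inl) (fun f => (H.ends f).map Sum.inr)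
  ends_mem := by
    intro f hf v hv
    rcases f with f | f
    · simp only [Sum.elim_inl] at hv
      obtain ⟨w, hw, rfl⟩ := Sym2.mem_map.mp hv
      exact Finset.inl_mem_disjSum.mpr
        (G.ends_mem f (Finset.inl_mem_disjSum.mp hf) w hw)
    · simp only [Sum.elim_inr] at hv
      obtain ⟨w, hw, rfl⟩ := Sym2.mem_map.mp hv
      exact Finset.inr_mem_disjSum.mpr
        (H.ends_mem f (Finset.inr_mem_disjSum.mp hf) w hw)

/-- `K₁`: the one-vertex graph. -/
def K1 : Multigraph Unit Empty where
  verts := Finset.univ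
  edges := ∅
  ends := fun f => f.elim
  ends_mem := fun f hf => absurd hf (Finset.notMem_empty f)

end Multigraph

theorem Set.ncard_image_eq_of_eq_iff {α X Y : Type*} {f : α → X} {g : α → Y} (S : Set α)
    (h : ∀ a b, f a = f b ↔ g a = g b) : (f '' S).ncard = (g '' S).ncard := by
  refine Set.ncard_congr (fun y hy => g hy.choose) (fun y hy => ⟨_, hy.choose_spec.1, rfl⟩)
    (fun y₁ y₂ h₁ h₂ heq => ?_) ?_
  · rw [← h₁.choose_spec.2, ← h₂.choose_spec.2]
    exact (h _ _).mpr heq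
  · rintro _ ⟨a, ha, rfl⟩
    have hfa : f a ∈ f '' S := ⟨a, ha, rfl⟩
    exact ⟨f a, hfa, (h _ _).mp hfa.choose_spec.2⟩

theorem SimpleGraph.Reachable.map_of_forall_adj {V W : Type*} {G : SimpleGraph V} {H : SimpleGraph W}
    (φ : V → W) (h : ∀ u w, G.Adj u w → H.Reachable (φ u) (φ w)) {u w : V}
    (huw : G.Reachable u w) : H.Reachable (φ u) (φ w) := by
  rw [SimpleGraph.reachable_iff_reflTransGen] at huw ⊢
  exact Relation.ReflTransGen.lift' φ
    (fun u w huw => (SimpleGraph.reachable_iff_reflTransGen _ _).mp (h u w huw)) _ _ huw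

namespace Multigraph

open SimpleGraph

variable {α β : Type}

def support (G : Multigraph α β) (A : Finset β) : Set α := {v | ∃ f ∈ A, v ∈ G.ends f}

def isolated (G : Multigraph α β) (A : Finset β) : Finset α :=
  G.verts.filter fun v => ∀ f ∈ A, v ∉ G.ends f

def weight (G : Multigraph α β) (A : Finset β) : MvPolynomial (Fin 3) ℤ :=
  X 0 ^ G.nComp A * X 1 ^ A.card * X 2 ^ G.nCov A

section Basic

variable (G : Multigraph α β) (A : Finset β)

theorem ccp_eq_sum_weight : G.ccp = ∑ A ∈ G.edges.powerset, G.weight A := rfl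

theorem nComp_eq_nCov_add : G.nComp A = G.nCov A + #(G.isolated A) := rfl

theorem mem_isolated {v : α} : v ∈ G.isolated A ↔ v ∈ G.verts ∧ v ∉ G.support A := by
  simp [isolated, support]

theorem support_finite : (G.support A).Finite := by
  refine (A.biUnion fun f => (G.ends f).toFinset).finite_toSet.subset ?_
  rintro v ⟨f, hf, hv⟩
  exact Finset.mem_biUnion.mpr ⟨f, hf, Sym2.mem_toFinset.mpr hv⟩

theorem support_insert {f : β} {u w : α} (hf : G.ends f = s(u, w)) :
    G.support (insert f A) = insert u (insert w (G.support A)) := by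
  ext v
  simp [support, hf, or_assoc]

theorem mem_support_of_adj {u w : α} (h : (G.sg A).Adj u w) : u ∈ G.support A := by
  obtain ⟨⟨f, hf, hfe⟩, -⟩ := (SimpleGraph.fromEdgeSet_adj _).mp h
  exact ⟨f, hf, hfe ▸ Sym2.mem_mk_left u w⟩

theorem reachable_of_mem_ends {f : β} (hf : f ∈ A) {u w : α} (hu : u ∈ G.ends f)
    (hw : w ∈ G.ends f) : (G.sg A).Reachable u w := by
  by_cases huw : u = w
  · exact huw ▸ Reachable.refl u
  · exact Adj.reachable ((SimpleGraph.fromEdgeSet_adj _).mpr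
      ⟨⟨f, hf, (Sym2.mem_and_mem_iff huw).mp ⟨hu, hw⟩⟩, huw⟩)

theorem eq_of_reachable_of_notMem_support {u w : α} (hu : u ∉ G.support A)
    (h : (G.sg A).Reachable u w) : w = u := by
  obtain ⟨p⟩ := h
  cases p with
  | nil => rfl
  | cons hadj _ => exact absurd (G.mem_support_of_adj A hadj) hu

theorem nCov_eq_ncard_image :
    G.nCov A = ((G.sg A).connectedComponentMk '' G.support A).ncard := by
  rw [← Nat.card_coe_set_eq]
  refine Nat.card_congr (Equiv.subtypeEquivRight fun c => ?_)
  constructor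
  · rintro ⟨f, hf, v, hv, rfl⟩
    exact ⟨v, ⟨f, hf, hv⟩, rfl⟩
  · rintro ⟨v, ⟨f, hf, hv⟩, rfl⟩
    exact ⟨f, hf, v, hv, rfl⟩

variable {G A} {G' : Multigraph α β}

theorem sg_congr (h : ∀ f ∈ A, G.ends f = G'.ends f) : G.sg A = G'.sg A := by
  unfold sg
  congr 1
  ext s
  exact ⟨fun ⟨f, hf, hs⟩ => ⟨f, hf, (h f hf).symm.trans hs⟩,
    fun ⟨f, hf, hs⟩ => ⟨f, hf, (h f hf).trans hs⟩⟩

theorem support_congr (h : ∀ f ∈ A, G.ends f = G'.ends f) : G.support A = G'.support A := by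
  ext v
  exact ⟨fun ⟨f, hf, hv⟩ => ⟨f, hf, h f hf ▸ hv⟩, fun ⟨f, hf, hv⟩ => ⟨f, hf, (h f hf).symm ▸ hv⟩⟩

theorem nCov_congr (h : ∀ f ∈ A, G.ends f = G'.ends f) : G.nCov A = G'.nCov A := by
  rw [nCov_eq_ncard_image, nCov_eq_ncard_image, sg_congr h, support_congr h]

end Basic

def mergeVert (v₁ v₂ w : α) : α := if w = v₂ then v₁ else w

theorem mergeVert_of_ne {v₁ v₂ w : α} (h : w ≠ v₂) : mergeVert v₁ v₂ w = w := if_neg h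

theorem mergeVert_right (v₁ v₂ : α) : mergeVert v₁ v₂ v₂ = v₁ := if_pos rfl

theorem mergeVert_left (v₁ v₂ : α) : mergeVert v₁ v₂ v₁ = v₁ := by
  simp [mergeVert]

theorem mergeVert_eq_left_iff {v₁ v₂ w : α} : mergeVert v₁ v₂ w = v₁ ↔ w = v₁ ∨ w = v₂ := by
  by_cases h : w = v₂ <;> simp [mergeVert, h]

theorem mem_image_mergeVert_of_ne {v₁ v₂ v : α} {S : Set α} (hv : v ≠ v₁) :
    v ∈ mergeVert v₁ v₂ '' S ↔ v ∈ S ∧ v ≠ v₂ := by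
  constructor
  · rintro ⟨w, hw, rfl⟩
    unfold mergeVert at hv ⊢
    split_ifs at hv ⊢ with h
    · exact absurd rfl hv
    · exact ⟨hw, h⟩
  · rintro ⟨hvS, hv₂⟩
    exact ⟨v, hvS, mergeVert_of_ne hv₂⟩

section Contraction

variable (G : Multigraph α β) (e : β) (v₁ v₂ : α) (B : Finset β)

theorem contract_ends (f : β) :
    (G.contract e v₁ v₂).ends f = (G.ends f).map (mergeVert v₁ v₂) := rfl

theorem contract_verts : (G.contract e v₁ v₂).verts = insert v₁ (G.verts.erase v₂) := rfl

theorem support_contract :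
    (G.contract e v₁ v₂).support B = mergeVert v₁ v₂ '' G.support B := by
  ext v
  simp only [support, contract_ends, Sym2.mem_map, Set.mem_ofPred_eq, Set.mem_image]
  constructor
  · rintro ⟨f, hf, w, hw, rfl⟩
    exact ⟨w, ⟨f, hf, hw⟩, rfl⟩
  · rintro ⟨w, ⟨f, hf, hw⟩, rfl⟩
    exact ⟨f, hf, w, hw, rfl⟩

variable {G e v₁ v₂}

theorem reachable_mergeVert (hends : G.ends e = s(v₁, v₂)) (u : α) :
    (G.sg (insert e B)).Reachable u (mergeVert v₁ v₂ u) := by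
  by_cases hu : u = v₂
  · rw [hu, mergeVert, if_pos rfl]
    exact G.reachable_of_mem_ends _ (mem_insert_self e B) (by simp [hends]) (by simp [hends])
  · rw [mergeVert_of_ne hu]

theorem reachable_contract_of_reachable_insert (hends : G.ends e = s(v₁, v₂)) {u w : α}
    (h : (G.sg (insert e B)).Reachable u w) :
    ((G.contract e v₁ v₂).sg B).Reachable (mergeVert v₁ v₂ u) (mergeVert v₁ v₂ w) := by
  refine h.map_of_forall_adj _ fun u w huw => ?_
  obtain ⟨⟨f, hf, hfe⟩, -⟩ := (fromEdgeSet_adj _).mp huw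
  rcases mem_insert.mp hf with rfl | hfB
  · have hu : u ∈ G.ends f := hfe ▸ Sym2.mem_mk_left u w
    have hw : w ∈ G.ends f := hfe ▸ Sym2.mem_mk_right u w
    rw [hends, Sym2.mem_iff] at hu hw
    rw [mergeVert_eq_left_iff.mpr hu, mergeVert_eq_left_iff.mpr hw]
  · exact (G.contract e v₁ v₂).reachable_of_mem_ends B hfB
      (by simp [contract_ends, hfe]) (by simp [contract_ends, hfe])

theorem reachable_insert_of_reachable_contract (hends : G.ends e = s(v₁, v₂)) {a b : α}
    (h : ((G.contract e v₁ v₂).sg B).Reachable a b) : (G.sg (insert e B)).Reachable a b := by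
  refine h.map_of_forall_adj id fun a b hab => ?_
  obtain ⟨⟨f, hf, hfe⟩, -⟩ := (fromEdgeSet_adj _).mp hab
  obtain ⟨y, hy, rfl⟩ := Sym2.mem_map.mp (hfe ▸ Sym2.mem_mk_left a b)
  obtain ⟨z, hz, rfl⟩ := Sym2.mem_map.mp (hfe ▸ Sym2.mem_mk_right _ b)
  exact ((reachable_mergeVert B hends y).symm.trans
    (G.reachable_of_mem_ends _ (mem_insert_of_mem hf) hy hz)).trans
    (reachable_mergeVert B hends z)

theorem reachable_insert_iff (hends : G.ends e = s(v₁, v₂)) (u w : α) :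
    (G.sg (insert e B)).Reachable u w ↔
      ((G.contract e v₁ v₂).sg B).Reachable (mergeVert v₁ v₂ u) (mergeVert v₁ v₂ w) :=
  ⟨reachable_contract_of_reachable_insert B hends, fun h =>
    ((reachable_mergeVert B hends u).trans (reachable_insert_of_reachable_contract B hends h)).trans
      (reachable_mergeVert B hends w).symm⟩

theorem mergeVert_image_support_insert (hends : G.ends e = s(v₁, v₂)) :
    mergeVert v₁ v₂ '' G.support (insert e B) = insert v₁ ((G.contract e v₁ v₂).support B) := by
  rw [G.support_insert B hends, Set.image_insert_eq, Set.image_insert_eq, support_contract,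
    mergeVert_left, mergeVert_right, Set.insert_idem]

theorem nCov_insert (hends : G.ends e = s(v₁, v₂)) :
    G.nCov (insert e B) =
      (G.contract e v₁ v₂).nCov B + if v₁ ∈ (G.contract e v₁ v₂).support B then 0 else 1 := by
  set H := G.contract e v₁ v₂
  have hcomp : G.nCov (insert e B) =
      ((H.sg B).connectedComponentMk '' insert v₁ (H.support B)).ncard := by
    rw [nCov_eq_ncard_image, ← mergeVert_image_support_insert B hends, Set.image_image]
    refine Set.ncard_image_eq_of_eq_iff _ fun u w => ?_
    rw [ConnectedComponent.eq, ConnectedComponent.eq, reachable_insert_iff B hends]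
  rw [hcomp, Set.image_insert_eq, nCov_eq_ncard_image]
  split_ifs with hv₁
  · rw [Set.insert_eq_of_mem (Set.mem_image_of_mem _ hv₁), add_zero]
  · refine Set.ncard_insert_of_notMem ?_ ((H.support_finite B).image _)
    rintro ⟨w, hw, hvw⟩
    exact hv₁ (H.eq_of_reachable_of_notMem_support B hv₁ (ConnectedComponent.exact hvw.symm) ▸ hw)

theorem erase_isolated_contract (hends : G.ends e = s(v₁, v₂)) :
    ((G.contract e v₁ v₂).isolated B).erase v₁ = G.isolated (insert e B) := by
  ext v
  by_cases hv : v = v₁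
  · simp [hv, mem_isolated, G.support_insert B hends]
  · simp only [mem_erase, mem_isolated, support_contract, mem_image_mergeVert_of_ne hv,
      G.support_insert B hends, Set.mem_insert_iff, contract_verts, mem_insert]
    tauto

theorem card_isolated_contract (hends : G.ends e = s(v₁, v₂)) :
    #((G.contract e v₁ v₂).isolated B) = #(G.isolated (insert e B)) +
      if v₁ ∈ (G.contract e v₁ v₂).support B then 0 else 1 := by
  rw [← erase_isolated_contract B hends]
  split_ifs with hv₁
  · rw [erase_eq_of_notMem fun h => ((mem_isolated _ _).mp h).2 hv₁, add_zero]
  · exact (card_erase_add_one ((mem_isolated _ _).mpr ⟨mem_insert_self _ _, hv₁⟩)).symm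

theorem nComp_insert (hends : G.ends e = s(v₁, v₂)) :
    G.nComp (insert e B) = (G.contract e v₁ v₂).nComp B := by
  rw [nComp_eq_nCov_add, nComp_eq_nCov_add, nCov_insert B hends,
    card_isolated_contract B hends]
  omega

theorem weight_insert (hends : G.ends e = s(v₁, v₂)) (heB : e ∉ B) :
    G.weight (insert e B) = X 1 * (G.contract e v₁ v₂).weight B +
      if v₁ ∉ (G.contract e v₁ v₂).support B then
        (X 1 * X 2 - X 1) * (G.contract e v₁ v₂).weight B else 0 := by
  rw [weight, weight, nComp_insert B hends, nCov_insert B hends, card_insert_of_notMem heB]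
  split_ifs <;> ring

end Contraction

section Extraction

variable {G : Multigraph α β} {v₁ v₂ : α} {B : Finset β} (e : β)

theorem mem_extract_edges {f : β} :
    f ∈ (G.extract v₁ v₂).edges ↔ f ∈ G.edges ∧ v₁ ∉ G.ends f ∧ v₂ ∉ G.ends f :=
  mem_filter

theorem contract_ends_eq_extract_ends {f : β} (hf : f ∈ (G.extract v₁ v₂).edges) :
    (G.contract e v₁ v₂).ends f = (G.extract v₁ v₂).ends f := by
  rw [contract_ends, Sym2.map_congr fun w hw => mergeVert_of_ne (v₁ := v₁) ?_, Sym2.map_id']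
  · rfl
  · rintro rfl
    exact (mem_extract_edges.mp hf).2.2 hw

theorem left_notMem_support_extract (hB : B ⊆ (G.extract v₁ v₂).edges) :
    v₁ ∉ (G.extract v₁ v₂).support B := fun ⟨_, hf, hv⟩ =>
  (mem_extract_edges.mp (hB hf)).2.1 hv

theorem isolated_contract_eq_insert (hB : B ⊆ (G.extract v₁ v₂).edges) :
    (G.contract e v₁ v₂).isolated B = insert v₁ ((G.extract v₁ v₂).isolated B) := by
  have hsupp := support_congr fun f hf => contract_ends_eq_extract_ends e (hB hf)
  ext v
  by_cases hv : v = v₁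
  · simp [hv, mem_isolated, hsupp, left_notMem_support_extract hB, contract_verts]
  · simp [hv, mem_isolated, hsupp, contract_verts, extract, and_assoc]

theorem nComp_contract (hB : B ⊆ (G.extract v₁ v₂).edges) :
    (G.contract e v₁ v₂).nComp B = (G.extract v₁ v₂).nComp B + 1 := by
  have hv₁ : v₁ ∉ (G.extract v₁ v₂).isolated B := by simp [mem_isolated, extract]
  rw [nComp_eq_nCov_add, nComp_eq_nCov_add, isolated_contract_eq_insert e hB,
    card_insert_of_notMem hv₁, nCov_congr fun f hf => contract_ends_eq_extract_ends e (hB hf),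
    add_assoc]

theorem weight_contract (hB : B ⊆ (G.extract v₁ v₂).edges) :
    (G.contract e v₁ v₂).weight B = X 0 * (G.extract v₁ v₂).weight B := by
  rw [weight, weight, nComp_contract e hB,
    nCov_congr fun f hf => contract_ends_eq_extract_ends e (hB hf)]
  ring

theorem filter_powerset_erase_eq_extract (hends : G.ends e = s(v₁, v₂)) :
    (G.edges.erase e).powerset.filter (fun B => v₁ ∉ (G.contract e v₁ v₂).support B) =
      (G.extract v₁ v₂).edges.powerset := by
  ext B
  rw [mem_filter, mem_powerset, mem_powerset, support_contract]
  simp only [Set.mem_image, mergeVert_eq_left_iff, support, subset_iff, mem_erase,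
    mem_extract_edges]
  constructor
  · rintro ⟨hB, hv⟩ f hf
    exact ⟨(hB hf).2, fun h => hv ⟨v₁, ⟨f, hf, h⟩, Or.inl rfl⟩,
      fun h => hv ⟨v₂, ⟨f, hf, h⟩, Or.inr rfl⟩⟩
  · intro hB
    refine ⟨fun f hf => ⟨?_, (hB hf).1⟩, ?_⟩
    · rintro rfl
      exact (hB hf).2.1 (by simp [hends])
    · rintro ⟨w, ⟨f, hf, hw⟩, rfl | rfl⟩
      exacts [(hB hf).2.1 hw, (hB hf).2.2 hw]

end Extraction

theorem ccp_eq_delete_add {G : Multigraph α β} {e : β} (he : e ∈ G.edges) :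
    G.ccp = (G.delete e).ccp + ∑ B ∈ (G.edges.erase e).powerset, G.weight (insert e B) := by
  rw [ccp_eq_sum_weight, ← insert_erase he, sum_powerset_insert (notMem_erase e _),
    erase_insert (notMem_erase e _)]
  rfl

end Multigraph

/-- Let `G` be a finite (multi)graph and `e` an edge of `G` with
endpoints `v₁`, `v₂`.  Then the covered components polynomial satisfies
`C(G,x,y,z) = C(G₋ₑ,x,y,z) + y·C(G/ₑ,x,y,z) + (xyz − xy)·C(G†ₑ,x,y,z)`. -/
theorem ccp_deletion_contraction_extraction {α β : Type} (G : Multigraph α β)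
    (e : β) (he : e ∈ G.edges) (v₁ v₂ : α) (hends : G.ends e = s(v₁, v₂)) :
    G.ccp = (G.delete e).ccp + X 1 * (G.contract e v₁ v₂).ccp +
      (X 0 * X 1 * X 2 - X 0 * X 1) * (G.extract v₁ v₂).ccp := by
  have hinsert : ∀ B ∈ (G.edges.erase e).powerset, G.weight (insert e B) =
      X 1 * (G.contract e v₁ v₂).weight B +
        if v₁ ∉ (G.contract e v₁ v₂).support B then
          (X 1 * X 2 - X 1) * (G.contract e v₁ v₂).weight B else 0 :=
    fun B hB => Multigraph.weight_insert B hends fun h => notMem_erase e _ (mem_powerset.mp hB h)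
  have hextract : ∀ B ∈ (G.extract v₁ v₂).edges.powerset,
      (X 1 * X 2 - X 1) * (G.contract e v₁ v₂).weight B =
        (X 0 * X 1 * X 2 - X 0 * X 1) * (G.extract v₁ v₂).weight B := fun B hB => by
    rw [Multigraph.weight_contract e (mem_powerset.mp hB)]
    ring
  rw [Multigraph.ccp_eq_delete_add he, sum_congr rfl hinsert, sum_add_distrib, ← mul_sum,
    ← sum_filter, Multigraph.filter_powerset_erase_eq_extract e hends, sum_congr rfl hextract,
    ← mul_sum, add_assoc]
  rfl

end
end

section
/- Let G¹ and G² be finite graphs. Then the covered components polynomial is multiplicative over disjoint unions: C(G¹ ⊔ G², x, y, z) = C(G¹, x, y, z) · C(G², x, y, z), where G¹ ⊔ G² denotes the disjoint union of G¹ and G². Moreover C(K₁, x, y, z) = x for the one-vertex graph K₁. -/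
open MvPolynomial Finset
open scoped Classical

noncomputable section

/-!
A spanning subgraph of `G ⊔ H` is a pair `(A₁, A₂)` of spanning subgraphs of `G` and `H`, and
its underlying simple graph is the disjoint sum of theirs. No walk crosses between the two
summands, so components, covered components and edges all add up, and each monomial of
`C(G ⊔ H)` is the product of the monomials of `A₁` and `A₂`.
-/

namespace SimpleGraph

variable {V W : Type*} {G : SimpleGraph V} {H : SimpleGraph W}

theorem sum_reachable_inl {a b : V} :
    (G ⊕g H).Reachable (.inl a) (.inl b) ↔ G.Reachable a b := by
  refine ⟨fun h => ?_, fun h => h.map Embedding.sumInl.toHom⟩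
  rw [reachable_iff_reflTransGen] at h ⊢
  -- collapsing all of `H` onto `a` turns walks in `G ⊕g H` into walks in `G`
  refine Relation.ReflTransGen.lift' (Sum.elim id fun _ => a) ?_ _ _ h
  rintro (u | u) (v | v) huv
  · exact .single (by simpa using huv)
  · simp at huv
  · simp at huv
  · exact .refl

theorem sum_reachable_inr {a b : W} :
    (G ⊕g H).Reachable (.inr a) (.inr b) ↔ H.Reachable a b := by
  refine ⟨fun h => ?_, fun h => h.map Embedding.sumInr.toHom⟩
  rw [reachable_iff_reflTransGen] at h ⊢
  refine Relation.ReflTransGen.lift' (Sum.elim (fun _ => b) id) ?_ _ _ h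
  rintro (u | u) (v | v) huv
  · exact .refl
  · simp at huv
  · simp at huv
  · exact .single (by simpa using huv)

theorem ConnectedComponent.map_sumInl_injective :
    Function.Injective (ConnectedComponent.map (Embedding.sumInl (G := G) (H := H)).toHom) := by
  refine ConnectedComponent.ind₂ fun a b h => ?_
  simpa [ConnectedComponent.eq, sum_reachable_inl] using h

theorem ConnectedComponent.map_sumInr_injective :
    Function.Injective (ConnectedComponent.map (Embedding.sumInr (G := G) (H := H)).toHom) := by
  refine ConnectedComponent.ind₂ fun a b h => ?_
  simpa [ConnectedComponent.eq, sum_reachable_inr] using h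

theorem image_connectedComponentMk_disjSum [DecidableEq G.ConnectedComponent]
    [DecidableEq H.ConnectedComponent] [DecidableEq (G ⊕g H).ConnectedComponent]
    (s : Finset V) (t : Finset W) :
    (s.disjSum t).image (G ⊕g H).connectedComponentMk =
      (s.image G.connectedComponentMk).image (ConnectedComponent.map Embedding.sumInl.toHom) ∪
      (t.image H.connectedComponentMk).image (ConnectedComponent.map Embedding.sumInr.toHom) := by
  ext c
  simp [Finset.mem_disjSum]

theorem card_image_connectedComponentMk_disjSum [DecidableEq G.ConnectedComponent]
    [DecidableEq H.ConnectedComponent] [DecidableEq (G ⊕g H).ConnectedComponent]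
    (s : Finset V) (t : Finset W) :
    ((s.disjSum t).image (G ⊕g H).connectedComponentMk).card =
      (s.image G.connectedComponentMk).card + (t.image H.connectedComponentMk).card := by
  rw [image_connectedComponentMk_disjSum, Finset.card_union_of_disjoint,
    Finset.card_image_of_injective _ ConnectedComponent.map_sumInl_injective,
    Finset.card_image_of_injective _ ConnectedComponent.map_sumInr_injective]
  simp only [Finset.disjoint_left, Finset.mem_image]
  rintro _ ⟨_, ⟨a, -, rfl⟩, rfl⟩ ⟨_, ⟨b, -, rfl⟩, h⟩
  exact not_reachable_sum_inl_inr a b (ConnectedComponent.eq.mp h.symm)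

end SimpleGraph

namespace Finset

theorem sum_powerset_disjSum {α β M : Type*} [AddCommMonoid M] (s : Finset α) (t : Finset β)
    (f : Finset (α ⊕ β) → M) :
    ∑ A ∈ (s.disjSum t).powerset, f A =
      ∑ A₁ ∈ s.powerset, ∑ A₂ ∈ t.powerset, f (A₁.disjSum A₂) := by
  rw [← sum_product']
  refine sum_equiv sumEquiv.toEquiv (fun A => ?_) (fun A _ => ?_)
  · simp [subset_disjSum]
  · simp [toLeft_disjSum_toRight]

end Finset

namespace Sym2

variable {α β : Type*} {f : α → β}

theorem map_eq_mk_iff_of_injective (hf : f.Injective) {z : Sym2 α} {u v : α} :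
    z.map f = s(f u, f v) ↔ z = s(u, v) :=
  (map.injective hf).eq_iff (b := s(u, v))

theorem map_ne_mk_left_of_notMem_range {a : β} (ha : a ∉ Set.range f) (z : Sym2 α) (b : β) :
    z.map f ≠ s(a, b) := fun h =>
  have ⟨x, _, hx⟩ := mem_map.mp (h ▸ mem_mk_left a b)
  ha ⟨x, hx⟩

theorem map_ne_mk_right_of_notMem_range {a : β} (ha : a ∉ Set.range f) (z : Sym2 α) (b : β) :
    z.map f ≠ s(b, a) :=
  eq_swap (a := b) ▸ map_ne_mk_left_of_notMem_range ha z b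

end Sym2

namespace Multigraph

variable {α β α' β' : Type}

def endpoints (G : Multigraph α β) (A : Finset β) : Finset α :=
  A.biUnion fun f => (G.ends f).toFinset

theorem mem_endpoints {G : Multigraph α β} {A : Finset β} {v : α} :
    v ∈ G.endpoints A ↔ ∃ f ∈ A, v ∈ G.ends f := by
  simp [endpoints]

theorem nCov_eq_card_image (G : Multigraph α β) (A : Finset β) :
    G.nCov A = ((G.endpoints A).image (G.sg A).connectedComponentMk).card := by
  rw [nCov, ← Nat.card_eq_finsetCard]
  refine Nat.card_congr (Equiv.subtypeEquivRight fun c => ?_)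
  simp only [covered, Finset.mem_image, mem_endpoints]
  exact ⟨fun ⟨f, hf, v, hv, h⟩ => ⟨v, ⟨f, hf, hv⟩, h⟩,
    fun ⟨v, ⟨f, hf, hv⟩, h⟩ => ⟨f, hf, v, hv, h⟩⟩

theorem nComp_eq (G : Multigraph α β) (A : Finset β) :
    G.nComp A = G.nCov A + (G.verts \ G.endpoints A).card := by
  simp [nComp, sdiff_eq_filter, mem_endpoints]

theorem endpoints_disjUnion (G : Multigraph α β) (H : Multigraph α' β') (A₁ : Finset β)
    (A₂ : Finset β') :
    (G.disjUnion H).endpoints (A₁.disjSum A₂) = (G.endpoints A₁).disjSum (H.endpoints A₂) := by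
  ext (v | v) <;> simp [mem_endpoints, disjUnion, Sym2.mem_map]

theorem sg_disjUnion (G : Multigraph α β) (H : Multigraph α' β') (A₁ : Finset β)
    (A₂ : Finset β') :
    (G.disjUnion H).sg (A₁.disjSum A₂) = G.sg A₁ ⊕g H.sg A₂ := by
  ext (u | u) (v | v) <;>
    simp [sg, disjUnion, Sym2.map_eq_mk_iff_of_injective, Sum.inl_injective, Sum.inr_injective,
      Sym2.map_ne_mk_left_of_notMem_range, Sym2.map_ne_mk_right_of_notMem_range]

theorem nCov_disjUnion (G : Multigraph α β) (H : Multigraph α' β') (A₁ : Finset β)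
    (A₂ : Finset β') :
    (G.disjUnion H).nCov (A₁.disjSum A₂) = G.nCov A₁ + H.nCov A₂ := by
  rw [nCov_eq_card_image, nCov_eq_card_image, nCov_eq_card_image, endpoints_disjUnion,
    sg_disjUnion, SimpleGraph.card_image_connectedComponentMk_disjSum]

theorem nComp_disjUnion (G : Multigraph α β) (H : Multigraph α' β') (A₁ : Finset β)
    (A₂ : Finset β') :
    (G.disjUnion H).nComp (A₁.disjSum A₂) = G.nComp A₁ + H.nComp A₂ := by
  rw [nComp_eq, nComp_eq, nComp_eq, nCov_disjUnion, endpoints_disjUnion, add_add_add_comm,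
    ← card_disjSum]
  congr 2
  ext (v | v) <;> simp [disjUnion]

theorem ccp_disjUnion (G : Multigraph α β) (H : Multigraph α' β') :
    (G.disjUnion H).ccp = G.ccp * H.ccp := by
  have hedges : (G.disjUnion H).edges = G.edges.disjSum H.edges := rfl
  rw [ccp, ccp, ccp, hedges, sum_powerset_disjSum, sum_mul_sum]
  refine sum_congr rfl fun A₁ _ => sum_congr rfl fun A₂ _ => ?_
  rw [nComp_disjUnion, nCov_disjUnion, card_disjSum]
  ring

theorem ccp_of_edges_eq_empty (G : Multigraph α β) (h : G.edges = ∅) :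
    G.ccp = X 0 ^ G.verts.card := by
  simp [ccp, h, nComp_eq, nCov_eq_card_image, endpoints]

theorem ccp_K1 : K1.ccp = X 0 := by
  simp [ccp_of_edges_eq_empty, K1]

end Multigraph

/-- The covered components polynomial is multiplicative over disjoint
unions, `C(G¹ ⊔ G², x, y, z) = C(G¹, x, y, z) · C(G², x, y, z)`, and
`C(K₁, x, y, z) = x` for the one-vertex graph `K₁`. -/
theorem ccp_disjUnion_mul_and_K1 :
    (∀ {α β α' β' : Type} (G : Multigraph α β) (H : Multigraph α' β'),
      (G.disjUnion H).ccp = G.ccp * H.ccp) ∧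
    Multigraph.K1.ccp = X 0 :=
  ⟨Multigraph.ccp_disjUnion, Multigraph.ccp_K1⟩
end
end
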